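/- arXiv:2509.14071 — 5 statements merged into one kernel-verified Lean document; each statement's English description precedes it below -/
import Mathlib

section
/- For positive integers y and j, the alternating sum of powers satisfies: sum over x from 0 to y of (-1)^x * x^(j-1) equals (-1)^y * [y^(j-1)/2 + sum over k from 2 to j of (B_k/j) * binom(j,k) * (2^k - 1) * y^(j-k)] - (B_j/j)*(2^j - 1), where B_k are the Bernoulli numbers. -/
/-!
Write `F(y)` for the bracket on the right. In terms of Bernoulli polynomials,
`j F(y) = 2^j B_j(y/2) - B_j(y) + j y^(j-1)`, so the duplication formula
`2^j (B_j(y/2) + B_j((y+1)/2)) = 2 B_j(y)` and `B_j(y+1) - B_j(y) = j y^(j-1)` give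
`F(y) + F(y+1) = (y+1)^(j-1)`, and the alternating sum telescopes.
The duplication formula follows along the naturals from its case `y = 0`,
`2^n B_n(1/2) = (2 - 2^n) B_n`, which is the coefficient identity of
`B(2t) (e^t + 1) = 2 B(t)` for `B(t) = t / (e^t - 1)`.
-/

open Finset

section
open PowerSeries

theorem rescale_two_bernoulliPowerSeries_mul_exp_add_one :
    rescale (2 : ℚ) (bernoulliPowerSeries ℚ) * (exp ℚ + 1) =
      C (2 : ℚ) * bernoulliPowerSeries ℚ := by
  have hexp : exp ℚ - 1 ≠ 0 := fun h ↦ by simpa using congrArg (coeff 1) h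
  apply mul_right_cancel₀ hexp
  have hsq : exp ℚ ^ 2 = rescale (2 : ℚ) (exp ℚ) := by
    simpa using exp_pow_eq_rescale_exp (A := ℚ) 2
  calc rescale (2 : ℚ) (bernoulliPowerSeries ℚ) * (exp ℚ + 1) * (exp ℚ - 1)
      = rescale (2 : ℚ) (bernoulliPowerSeries ℚ * (exp ℚ - 1)) := by
        rw [map_mul, map_sub, map_one, ← hsq]; ring
    _ = C (2 : ℚ) * bernoulliPowerSeries ℚ * (exp ℚ - 1) := by
        rw [mul_assoc, bernoulliPowerSeries_mul_exp_sub_one, rescale_X]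

end

open Nat in
theorem sum_bernoulli_mul_choose_mul_two_pow (n : ℕ) :
    ∑ k ∈ range (n + 1), bernoulli k * n.choose k * 2 ^ k = (2 - 2 ^ n) * bernoulli n := by
  have h := congrArg (PowerSeries.coeff n) rescale_two_bernoulliPowerSeries_mul_exp_add_one
  rw [mul_add, mul_one, map_add, PowerSeries.coeff_C_mul, PowerSeries.coeff_rescale,
    PowerSeries.coeff_mul, Nat.sum_antidiagonal_eq_sum_range_succ_mk] at h
  simp only [bernoulliPowerSeries, PowerSeries.coeff_rescale, PowerSeries.coeff_mk,
    PowerSeries.coeff_exp, Algebra.algebraMap_self, RingHom.id_apply] at h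
  have hfac (m : ℕ) : (m ! : ℚ) ≠ 0 := mod_cast m.factorial_ne_zero
  have hterm : ∀ k ∈ range (n + 1), bernoulli k * n.choose k * 2 ^ k
      = n ! * (2 ^ k * (bernoulli k / k !) * (1 / (n - k)!)) := by
    intro k hk
    have hkn : k ≤ n := Nat.lt_succ_iff.mp (mem_range.mp hk)
    rw [Nat.choose_eq_factorial_div_factorial hkn,
      Nat.cast_div (Nat.factorial_mul_factorial_dvd_factorial hkn) (by simp [hfac])]
    push_cast
    field_simp
  rw [sum_congr rfl hterm, ← mul_sum, eq_sub_of_add_eq h]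
  field_simp

theorem sum_range_succ_neg_one_pow_mul_of_add_succ {R : Type*} [CommRing R] {f F : ℕ → R}
    (h : ∀ n, F n + F (n + 1) = f (n + 1)) (y : ℕ) :
    ∑ x ∈ range (y + 1), (-1) ^ x * f x = (-1) ^ y * F y + (f 0 - F 0) := by
  induction y with
  | zero => simp
  | succ y ih =>
    rw [sum_range_succ, ih, ← h y, pow_succ]
    ring

namespace Polynomial

theorem bernoulli_eval_eq_sum (n : ℕ) (x : ℚ) :
    (bernoulli n).eval x =
      ∑ k ∈ range (n + 1), _root_.bernoulli k * n.choose k * x ^ (n - k) := by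
  simp [bernoulli, eval_finsetSum]

theorem bernoulli_eval_add_one (n : ℕ) (x : ℚ) :
    (bernoulli n).eval (x + 1) = (bernoulli n).eval x + n * x ^ (n - 1) := by
  rw [add_comm, bernoulli_eval_one_add]

theorem two_pow_mul_bernoulli_eval_div_two (n : ℕ) (x : ℚ) :
    2 ^ n * (bernoulli n).eval (x / 2) =
      ∑ k ∈ range (n + 1), _root_.bernoulli k * n.choose k * 2 ^ k * x ^ (n - k) := by
  rw [bernoulli_eval_eq_sum, mul_sum]
  refine sum_congr rfl fun k hk ↦ ?_
  rw [← Nat.add_sub_of_le (Nat.lt_succ_iff.mp (mem_range.mp hk))]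
  simp only [Nat.add_sub_cancel_left, pow_add, div_pow]
  field_simp

theorem two_pow_mul_bernoulli_eval_half (n : ℕ) :
    2 ^ n * (bernoulli n).eval (1 / 2) = (2 - 2 ^ n) * _root_.bernoulli n := by
  rw [two_pow_mul_bernoulli_eval_div_two, ← sum_bernoulli_mul_choose_mul_two_pow]
  simp

theorem two_pow_mul_bernoulli_eval_div_two_add (j n : ℕ) :
    2 ^ j * ((bernoulli j).eval ((n : ℚ) / 2) + (bernoulli j).eval (((n : ℚ) + 1) / 2)) =
      2 * (bernoulli j).eval (n : ℚ) := by
  induction n with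
  | zero =>
    simp only [Nat.cast_zero, zero_div, zero_add, bernoulli_eval_zero, mul_add,
      two_pow_mul_bernoulli_eval_half]
    ring
  | succ n ih =>
    have hshift : ((n + 1 : ℕ) + 1 : ℚ) / 2 = 1 + (n : ℚ) / 2 := by push_cast; ring
    have hpow :
        (j : ℚ) * (2 ^ j * ((n : ℚ) / 2) ^ (j - 1)) = j * (2 * (n : ℚ) ^ (j - 1)) := by
      rcases j with _ | j
      · simp
      · rw [div_pow, Nat.add_sub_cancel, pow_succ]; field_simp
    rw [hshift, bernoulli_eval_one_add, Nat.cast_succ, bernoulli_eval_add_one]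
    linear_combination ih + hpow

theorem two_pow_mul_bernoulli_eval_div_two_sub (j : ℕ) (y : ℚ) :
    2 ^ j * (bernoulli j).eval (y / 2) - (bernoulli j).eval y =
      ∑ k ∈ range (j + 1), _root_.bernoulli k * j.choose k * (2 ^ k - 1) * y ^ (j - k) := by
  rw [two_pow_mul_bernoulli_eval_div_two, bernoulli_eval_eq_sum, ← sum_sub_distrib]
  exact sum_congr rfl fun k _ ↦ by ring

end Polynomial

/-- `halfEulerShift j y = E_{j-1}(y + 1) / 2` for the Euler polynomial `E_{j-1}`. -/
def halfEulerShift (j : ℕ) (y : ℚ) : ℚ :=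
  y ^ (j - 1) / 2 + ∑ k ∈ Icc 2 j, (bernoulli k / j) * j.choose k * (2 ^ k - 1) * y ^ (j - k)

theorem mul_halfEulerShift (j : ℕ) (y : ℚ) :
    j * halfEulerShift j y =
      2 ^ j * (Polynomial.bernoulli j).eval (y / 2) - (Polynomial.bernoulli j).eval y +
        j * y ^ (j - 1) := by
  rw [Polynomial.two_pow_mul_bernoulli_eval_div_two_sub, halfEulerShift]
  rcases j with _ | j
  · simp
  · have hj : (j : ℚ) + 1 ≠ 0 := by positivity
    rw [← sum_range_add_sum_Ico _ (by omega : 2 ≤ j + 1 + 1), ← Ico_add_one_right_eq_Icc]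
    simp only [sum_range_succ, range_one, sum_singleton, bernoulli_one, Nat.choose_one_right,
      Nat.cast_add, Nat.cast_one, mul_add, mul_sum, ← mul_assoc, mul_div_cancel₀ _ hj]
    ring

theorem halfEulerShift_add_succ {j : ℕ} (hj : j ≠ 0) (n : ℕ) :
    halfEulerShift j n + halfEulerShift j (n + 1) = ((n : ℚ) + 1) ^ (j - 1) := by
  have hj' : (j : ℚ) ≠ 0 := Nat.cast_ne_zero.mpr hj
  apply mul_left_cancel₀ hj'
  linear_combination mul_halfEulerShift j n + mul_halfEulerShift j (n + 1) +
    Polynomial.two_pow_mul_bernoulli_eval_div_two_add j n -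
    Polynomial.bernoulli_eval_add_one j n

theorem halfEulerShift_zero {j : ℕ} (hj : j ≠ 0) :
    halfEulerShift j 0 = 0 ^ (j - 1) + bernoulli j / j * (2 ^ j - 1) := by
  have hj' : (j : ℚ) ≠ 0 := Nat.cast_ne_zero.mpr hj
  apply mul_left_cancel₀ hj'
  rw [mul_halfEulerShift, zero_div, Polynomial.bernoulli_eval_zero]
  field_simp
  ring

theorem alt_sum_powers_general (y j : ℕ) (hj : 0 < j) :
    ∑ x ∈ range (y + 1), (-1 : ℚ) ^ x * (x : ℚ) ^ (j - 1) =
      (-1 : ℚ) ^ y * ((y : ℚ) ^ (j - 1) / 2 +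
        ∑ k ∈ Icc 2 j, (bernoulli k / j) * (j.choose k) * (2 ^ k - 1) * (y : ℚ) ^ (j - k))
      - (bernoulli j / j) * (2 ^ j - 1) := by
  have hsum := sum_range_succ_neg_one_pow_mul_of_add_succ
    (f := fun x : ℕ ↦ (x : ℚ) ^ (j - 1)) (F := fun n ↦ halfEulerShift j n)
    (fun n ↦ by simpa using halfEulerShift_add_succ hj.ne' n) y
  rw [hsum, Nat.cast_zero, halfEulerShift_zero hj.ne', halfEulerShift]
  ring

/-- Alternating sum of powers: for positive integers `y` and `j`,
`∑_{x=0}^{y} (-1)^x x^{j-1} = (-1)^y [y^{j-1}/2 + ∑_{k=2}^{j} (B_k/j) C(j,k)(2^k-1) y^{j-k}]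
  - (B_j/j)(2^j-1)`. -/
theorem alt_sum_powers (y j : ℕ) (hy : 0 < y) (hj : 0 < j) :
    ∑ x ∈ range (y + 1), (-1 : ℚ) ^ x * (x : ℚ) ^ (j - 1) =
      (-1 : ℚ) ^ y * ((y : ℚ) ^ (j - 1) / 2 +
        ∑ k ∈ Icc 2 j, (bernoulli k / j) * (j.choose k) * (2 ^ k - 1) * (y : ℚ) ^ (j - k))
      - (bernoulli j / j) * (2 ^ j - 1) :=
  alt_sum_powers_general y j hj
end

section
/- For the Krawtchouk-type weight: if p = λ/(1+λ) and q = 1/(1+λ) for λ > 0, the sum over all interlaced sequences 0 ≤ x_1 < x_2 < ... < x_m ≤ n of λ^(sum x_i - m(m-1)/2) / (1+λ)^(m(n+1-m)) times [Vandermonde(x)]^2 / prod_i (x_i!(n-x_i)!) times prod_{i=0}^{m-1} (n-i)!/i! equals 1, i.e., the single-level particle distribution is a probability distribution. -/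
/-!
Since `1 / (x! (n - x)!) = C(n, x) / n!`, the claim is the evaluation of the partition
function `Z = ∑_{x_1 < ⋯ < x_m} Δ(x)² ∏ C(n, x_k) λ^{x_k}`. Up to a common sign, `Δ(x)²` is the
product of the falling-factorial Vandermonde determinants `det (x_k)_i` and `det (n - x_k)_j`, so by
Cauchy–Binet `±Z` is the determinant of the `m × m` matrix
`∑_x C(n, x) λ^x (x)_i (n - x)_j = (n)_{i+j} λ^i (1 + λ)^{n-i-j}`.
Scaling its rows and columns leaves the falling-factorial Vandermonde matrix at the points `n - i`,
whose determinant is the same sign times `∏ i!`.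
-/

open Finset Matrix Equiv

section CauchyBinet

variable {m : ℕ} {ι : Type*} [Fintype ι] [LinearOrder ι]

theorem Finset.sum_injective_eq_sum_strictMono_sum_perm {M : Type*} [AddCommMonoid M]
    (F : (Fin m → ι) → M) :
    ∑ p with Function.Injective p, F p =
      ∑ g with StrictMono g, ∑ σ : Perm (Fin m), F (g ∘ σ) := by
  rw [← sum_product']
  symm
  refine sum_nbij' (fun gσ => gσ.1 ∘ gσ.2) (fun p => (p ∘ Tuple.sort p, (Tuple.sort p)⁻¹))
    ?_ ?_ ?_ ?_ fun _ _ => rfl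
  · simp only [mem_product, mem_filter, mem_univ, true_and, and_true]
    exact fun gσ hg => hg.injective.comp gσ.2.injective
  · simp only [mem_product, mem_filter, mem_univ, true_and, and_true]
    exact fun p hp =>
      (Tuple.monotone_sort p).strictMono_of_injective (hp.comp (Tuple.sort p).injective)
  · rintro ⟨g, σ⟩ hg
    simp only [mem_product, mem_filter, mem_univ, true_and, and_true] at hg
    have hsorted : (g ∘ σ) ∘ Tuple.sort (g ∘ σ) = g := by
      rw [Tuple.comp_perm_comp_sort_eq_comp_sort, Tuple.sort_eq_refl_iff_monotone.2 hg.monotone]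
      rfl
    have hsort : Tuple.sort (g ∘ σ) = σ⁻¹ :=
      Equiv.ext fun i => Perm.eq_inv_iff_eq.2 (hg.injective (congrFun hsorted i))
    simp only [hsort, inv_inv, Prod.mk.injEq, and_true]
    ext
    simp
  · intro p _
    ext
    simp

theorem Matrix.det_mul_eq_sum_strictMono {R : Type*} [CommRing R]
    (A : Matrix (Fin m) ι R) (B : Matrix ι (Fin m) R) :
    (A * B).det = ∑ g with StrictMono g, (A.submatrix id g).det * (B.submatrix g id).det := by
  have expand :
      (A * B).det = ∑ p : Fin m → ι, (∏ i, B (p i) i) * (A.submatrix id p).det := by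
    simp only [det_apply', mul_apply, prod_univ_sum, mul_sum, Fintype.piFinset_univ,
      submatrix_apply, id, prod_mul_distrib]
    rw [sum_comm]
    exact sum_congr rfl fun _ _ => sum_congr rfl fun _ _ => by ring
  have drop : ∑ p : Fin m → ι, (∏ i, B (p i) i) * (A.submatrix id p).det =
      ∑ p with Function.Injective p, (∏ i, B (p i) i) * (A.submatrix id p).det := by
    refine (sum_subset (filter_subset _ _) fun p _ hp => ?_).symm
    obtain ⟨a, b, hab, hne⟩ := Function.not_injective_iff.1 (by simpa using hp)
    rw [det_zero_of_column_eq hne fun k => by simp [hab], mul_zero]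
  rw [expand, drop, sum_injective_eq_sum_strictMono_sum_perm]
  refine sum_congr rfl fun g _ => ?_
  have hperm (σ : Perm (Fin m)) :
      A.submatrix id (g ∘ σ) = (A.submatrix id g).submatrix id σ := rfl
  simp only [hperm, det_permute', det_apply' (B.submatrix g id), mul_sum]
  exact sum_congr rfl fun σ _ => by simp only [Function.comp_apply, submatrix_apply, id_eq]; ring

end CauchyBinet

namespace Matrix

variable {R : Type*} [CommRing R] {m : ℕ}

theorem det_of_descFactorial (v : Fin m → ℕ) :
    (of fun i j : Fin m => ((v i).descFactorial j : R)).det =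
      (vandermonde fun i => (v i : R)).det := by
  have hℤ : (of fun i j : Fin m => ((v i).descFactorial j : ℤ)).det =
      (vandermonde fun i => (v i : ℤ)).det := by
    rw [det_eval_matrixOfPolynomials_eq_det_vandermonde _ (fun j => descPochhammer ℤ j)
      (descPochhammer_natDegree ℤ ·) (monic_descPochhammer ℤ ·)]
    simp [descPochhammer_eval_eq_descFactorial]
  have := congrArg (Int.castRingHom R) hℤ
  rw [RingHom.map_det, RingHom.map_det] at this
  convert this using 2 <;> ext <;> simp [vandermonde_apply]

theorem det_vandermonde_const_sub (c : R) (v : Fin m → R) :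
    (vandermonde fun i => c - v i).det =
      (-1) ^ (∑ j : Fin m, (j : ℕ)) * (vandermonde v).det := by
  have hneg : vandermonde (fun i => -v i + c) = vandermonde (fun i => c - v i) := by
    simp [neg_add_eq_sub]
  rw [← hneg, det_vandermonde_add, ← prod_pow_eq_pow_sum, ← det_mul_row]
  congr 1
  ext i j
  rw [of_apply, vandermonde_apply, vandermonde_apply, neg_pow]

theorem det_vandermonde_id_eq_prod_factorial (m : ℕ) :
    (vandermonde fun i : Fin m => (i : R)).det = ∏ i ∈ range m, (i.factorial : R) := by
  cases m with
  | zero => simp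
  | succ k =>
    rw [det_vandermonde_id_eq_superFactorial, ← Nat.prod_range_succ_factorial]
    push_cast
    rfl

theorem det_vandermonde_eq_prod_prod_Iio (v : Fin m → R) :
    (vandermonde v).det = ∏ j, ∏ i ∈ Iio j, (v j - v i) := by
  rw [det_vandermonde]
  exact prod_comm' fun i j => by simp [and_comm]

end Matrix

theorem Nat.choose_mul_descFactorial_mul_descFactorial (i j y z : ℕ) :
    (i + y + (j + z)).choose (i + y) * (i + y).descFactorial i * (j + z).descFactorial j =
      (i + y + (j + z)).descFactorial (i + j) * (y + z).choose y := by
  refine Nat.eq_of_mul_eq_mul_right (Nat.mul_pos y.factorial_pos z.factorial_pos) ?_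
  have hx : y.factorial * (i + y).descFactorial i = (i + y).factorial := by
    simpa using Nat.factorial_mul_descFactorial (Nat.le_add_right i y)
  have hnx : z.factorial * (j + z).descFactorial j = (j + z).factorial := by
    simpa using Nat.factorial_mul_descFactorial (Nat.le_add_right j z)
  have hn : (y + z).factorial * (i + y + (j + z)).descFactorial (i + j) =
      (i + y + (j + z)).factorial := by
    have := Nat.factorial_mul_descFactorial (show i + j ≤ i + y + (j + z) by omega)
    rwa [show i + y + (j + z) - (i + j) = y + z by omega] at this
  calc _ = (i + y + (j + z)).choose (i + y) * (y.factorial * (i + y).descFactorial i) *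
        (z.factorial * (j + z).descFactorial j) := by ring
    _ = (i + y + (j + z)).factorial := by
        rw [hx, hnx, Nat.choose_symm_add, Nat.add_choose_mul_factorial_mul_factorial]
    _ = _ := by
        rw [← hn, ← Nat.add_choose_mul_factorial_mul_factorial y z, ← Nat.choose_symm_add]
        ring

theorem sum_choose_mul_descFactorial_mul_descFactorial_mul_pow {R : Type*} [CommSemiring R]
    (a : R) (n i j : ℕ) :
    ∑ x ∈ range (n + 1),
        (n.choose x * x.descFactorial i * (n - x).descFactorial j : R) * a ^ x =
      n.descFactorial (i + j) * a ^ i * (1 + a) ^ (n - (i + j)) := by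
  rcases le_or_gt (i + j) n with hle | hlt
  · obtain ⟨k, rfl⟩ := Nat.exists_eq_add_of_le hle
    have below : ∀ x < i, x.descFactorial i = 0 :=
      fun x hx => Nat.descFactorial_eq_zero_iff_lt.2 hx
    have above : ∀ y < j, (i + j + k - (i + (k + 1 + y))).descFactorial j = 0 :=
      fun y hy => Nat.descFactorial_eq_zero_iff_lt.2 (by omega)
    have middle : ∀ y ∈ range (k + 1),
        ((i + j + k).choose (i + y) * (i + y).descFactorial i *
          (i + j + k - (i + y)).descFactorial j : R) * a ^ (i + y) =
        (i + j + k).descFactorial (i + j) * a ^ i * (a ^ y * k.choose y) := by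
      intro y hy
      obtain ⟨z, rfl⟩ := Nat.exists_eq_add_of_le (Nat.le_of_lt_succ (mem_range.1 hy))
      rw [show i + j + (y + z) = i + y + (j + z) by ring, Nat.add_sub_cancel_left,
        ← Nat.cast_mul, ← Nat.cast_mul, Nat.choose_mul_descFactorial_mul_descFactorial]
      push_cast
      ring
    rw [show i + j + k + 1 = i + (k + 1 + j) by ring, sum_range_add, sum_range_add,
      sum_congr rfl middle,
      sum_eq_zero (s := range i) fun x hx => by simp [below x (mem_range.1 hx)],
      sum_eq_zero (s := range j) fun y hy => by simp [above y (mem_range.1 hy)],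
      ← mul_sum, add_comm 1 a, add_pow, Nat.add_sub_cancel_left]
    simp
  · rw [Nat.descFactorial_eq_zero_iff_lt.2 hlt, Nat.cast_zero, zero_mul, zero_mul]
    refine sum_eq_zero fun x hx => ?_
    rcases lt_or_ge x i with hxi | hxi
    · simp [Nat.descFactorial_eq_zero_iff_lt.2 hxi]
    · have : n - x < j := by have := mem_range.1 hx; omega
      simp [Nat.descFactorial_eq_zero_iff_lt.2 this]

section Krawtchouk

variable {R : Type*} [CommRing R] (n m : ℕ) (a : R)

def binomialFallingMatrix : Matrix (Fin m) (Fin (n + 1)) R :=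
  of fun i x => (n.choose x * a ^ (x : ℕ) : R) * ((x : ℕ).descFactorial i : R)

def reflectedFallingMatrix : Matrix (Fin (n + 1)) (Fin m) R :=
  of fun x j => ((n - x : ℕ).descFactorial j : R)

def krawtchoukPartition : R :=
  ∑ g : Fin m → Fin (n + 1) with StrictMono g,
    (vandermonde fun k => ((g k : ℕ) : R)).det ^ 2 * ∏ k, (n.choose (g k) * a ^ (g k : ℕ) : R)

variable {n m}

theorem det_binomialFallingMatrix_submatrix (g : Fin m → Fin (n + 1)) :
    ((binomialFallingMatrix n m a).submatrix id g).det =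
      (∏ k, (n.choose (g k) * a ^ (g k : ℕ) : R)) *
        (vandermonde fun k => ((g k : ℕ) : R)).det := by
  rw [← det_of_descFactorial, ← det_mul_column, ← det_transpose]
  rfl

theorem det_reflectedFallingMatrix_submatrix (g : Fin m → Fin (n + 1)) :
    ((reflectedFallingMatrix n m).submatrix g id).det =
      (-1) ^ (∑ j : Fin m, (j : ℕ)) * (vandermonde fun k => ((g k : ℕ) : R)).det := by
  have hcast (k : Fin m) : ((n - g k : ℕ) : R) = n - (g k : ℕ) :=
    Nat.cast_sub (Nat.lt_succ_iff.1 (g k).2)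
  rw [← det_vandermonde_const_sub, ← funext hcast, ← det_of_descFactorial]
  rfl

theorem binomialFallingMatrix_mul_reflectedFallingMatrix_apply (i j : Fin m) :
    (binomialFallingMatrix n m a * reflectedFallingMatrix (R := R) n m) i j =
      n.descFactorial (i + j) * a ^ (i : ℕ) * (1 + a) ^ (n - (i + j)) := by
  rw [mul_apply, ← sum_choose_mul_descFactorial_mul_descFactorial_mul_pow,
    ← Fin.sum_univ_eq_sum_range]
  refine sum_congr rfl fun x _ => ?_
  simp only [binomialFallingMatrix, reflectedFallingMatrix, of_apply]
  ring

theorem det_binomialFallingMatrix_mul_reflectedFallingMatrix (hm : m ≤ n + 1) :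
    (binomialFallingMatrix n m a * reflectedFallingMatrix (R := R) n m).det *
        ∏ j : Fin m, (1 + a) ^ (j : ℕ) =
      (∏ i : Fin m, (n.descFactorial i * a ^ (i : ℕ) * (1 + a) ^ (n - i) : R)) *
        ((-1) ^ (∑ j : Fin m, (j : ℕ)) * ∏ i ∈ range m, (i.factorial : R)) := by
  have hentry : (of fun i j : Fin m => (1 + a) ^ (j : ℕ) *
      (binomialFallingMatrix n m a * reflectedFallingMatrix (R := R) n m) i j) =
      of fun i j : Fin m => (n.descFactorial i * a ^ (i : ℕ) * (1 + a) ^ (n - i) : R) *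
        of (fun i j : Fin m => ((n - i : ℕ).descFactorial j : R)) i j := by
    ext i j
    rw [of_apply, of_apply, of_apply, binomialFallingMatrix_mul_reflectedFallingMatrix_apply,
      ← Nat.descFactorial_mul_descFactorial (Nat.le_add_right i j), Nat.add_sub_cancel_left]
    by_cases hj : (j : ℕ) ≤ n - i
    · have hpow : (1 + a) ^ (n - i) = (1 + a) ^ (j : ℕ) * (1 + a) ^ (n - (i + j)) := by
        rw [← pow_add]
        congr 1
        omega
      rw [hpow]
      push_cast
      ring
    · simp [Nat.descFactorial_eq_zero_iff_lt.2 (not_le.1 hj)]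
  have hcast (i : Fin m) : ((n - i : ℕ) : R) = n - (i : ℕ) := Nat.cast_sub (by omega)
  rw [mul_comm, ← det_mul_row, hentry, det_mul_column, det_of_descFactorial, funext hcast,
    det_vandermonde_const_sub, det_vandermonde_id_eq_prod_factorial]

theorem krawtchoukPartition_mul_prod_pow (hm : m ≤ n + 1) :
    krawtchoukPartition n m a * ∏ j ∈ range m, (1 + a) ^ j =
      ∏ i ∈ range m, (n.descFactorial i * a ^ i * (1 + a) ^ (n - i) * i.factorial : R) := by
  have hsign : IsUnit ((-1 : R) ^ (∑ j : Fin m, (j : ℕ))) := isUnit_neg_one.pow _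
  have hdet := det_binomialFallingMatrix_mul_reflectedFallingMatrix a hm
  rw [det_mul_eq_sum_strictMono] at hdet
  simp only [det_binomialFallingMatrix_submatrix, det_reflectedFallingMatrix_submatrix] at hdet
  have hpair (g : Fin m → Fin (n + 1)) :
      (∏ k, (n.choose (g k) * a ^ (g k : ℕ) : R)) *
          (vandermonde fun k => ((g k : ℕ) : R)).det *
        ((-1) ^ (∑ j : Fin m, (j : ℕ)) * (vandermonde fun k => ((g k : ℕ) : R)).det) =
      (-1) ^ (∑ j : Fin m, (j : ℕ)) * ((vandermonde fun k => ((g k : ℕ) : R)).det ^ 2 *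
        ∏ k, (n.choose (g k) * a ^ (g k : ℕ) : R)) := by
    ring
  simp only [hpair, ← mul_sum] at hdet
  apply hsign.mul_left_cancel
  rw [prod_mul_distrib, ← Fin.prod_univ_eq_prod_range (fun j => (1 + a) ^ j),
    ← Fin.prod_univ_eq_prod_range (fun i => (n.descFactorial i * a ^ i * (1 + a) ^ (n - i) : R)),
    krawtchoukPartition]
  linear_combination hdet

end Krawtchouk

theorem Nat.sum_range_sub_of_le {n m : ℕ} (hm : m ≤ n + 1) :
    ∑ i ∈ range m, (n - i) = m * (n + 1 - m) + m * (m - 1) / 2 := by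
  calc ∑ i ∈ range m, (n - i) = ∑ i ∈ range m, ((n + 1 - m) + (m - 1 - i)) :=
        sum_congr rfl fun i hi => by have := mem_range.1 hi; omega
    _ = m * (n + 1 - m) + ∑ i ∈ range m, i := by
        rw [sum_add_distrib, sum_const, card_range, smul_eq_mul, sum_range_reflect (fun i => i) m]
    _ = _ := by rw [sum_range_id]

theorem prod_range_descFactorial_mul_pow_mul_factorial {K : Type*} [Field K] [CharZero K]
    {n m : ℕ} (hm : m ≤ n + 1) (a : K) :
    (∏ i ∈ range m, (n.descFactorial i * a ^ i * (1 + a) ^ (n - i) * i.factorial : K)) *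
        ∏ i ∈ range m, ((n - i).factorial / i.factorial : K) =
      (n.factorial : K) ^ m * a ^ (m * (m - 1) / 2) *
        (1 + a) ^ (m * (n + 1 - m) + m * (m - 1) / 2) := by
  have hterm : ∀ i ∈ range m,
      (n.descFactorial i * a ^ i * (1 + a) ^ (n - i) * i.factorial : K) *
        ((n - i).factorial / i.factorial) = n.factorial * (a ^ i * (1 + a) ^ (n - i)) := by
    intro i hi
    have hfac : ((n - i).factorial * n.descFactorial i : K) = n.factorial := by
      exact_mod_cast Nat.factorial_mul_descFactorial (by have := mem_range.1 hi; omega)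
    have hi : (i.factorial : K) ≠ 0 := Nat.cast_ne_zero.2 i.factorial_ne_zero
    field_simp
    linear_combination (a ^ i * (1 + a) ^ (n - i)) * hfac
  rw [← prod_mul_distrib, prod_congr rfl hterm, prod_mul_distrib, prod_const, card_range,
    prod_mul_distrib, prod_pow_eq_pow_sum, prod_pow_eq_pow_sum, sum_range_id,
    Nat.sum_range_sub_of_le hm, mul_assoc]

theorem prod_choose_mul_pow {K : Type*} [Field K] [CharZero K] {n m : ℕ} (a : K)
    (x : Fin m → Fin (n + 1)) :
    ∏ k, (n.choose (x k) * a ^ (x k : ℕ) : K) =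
      (n.factorial : K) ^ m * a ^ (∑ k, (x k : ℕ)) /
        ∏ k, (((x k : ℕ).factorial : K) * ((n - x k : ℕ).factorial : K)) := by
  simp only [Nat.cast_choose K (Nat.lt_succ_iff.1 (x _).2), prod_mul_distrib, prod_div_distrib,
    prod_const, card_univ, Fintype.card_fin, prod_pow_eq_pow_sum]
  ring

theorem krawtchouk_normalization_general (n m : ℕ) (hmn : m ≤ n)
    (lam : ℝ) (hlam : 0 < lam) :
    ∑ x ∈ Finset.univ.filter (fun x : Fin m → Fin (n + 1) =>
        ∀ i j : Fin m, i < j → x i < x j),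
      (lam ^ (∑ i, (x i : ℕ)) / lam ^ (m * (m - 1) / 2)) / (1 + lam) ^ (m * (n + 1 - m)) *
        ((∏ j : Fin m, ∏ i ∈ Finset.Iio j, ((x j : ℕ) - (x i : ℕ) : ℝ)) ^ 2 /
          ∏ i : Fin m, ((Nat.factorial (x i) : ℝ) * (Nat.factorial (n - (x i : ℕ)) : ℝ))) *
        ∏ i ∈ Finset.range m, ((Nat.factorial (n - i) : ℝ) / (Nat.factorial i : ℝ)) = 1 := by
  have hZ := krawtchoukPartition_mul_prod_pow lam (Nat.le_succ_of_le hmn)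
  have hprod := prod_range_descFactorial_mul_pow_mul_factorial (Nat.le_succ_of_le hmn) lam
  rw [prod_pow_eq_pow_sum, sum_range_id] at hZ
  rw [← hZ, pow_add] at hprod
  have hfilter :
      univ.filter (fun x : Fin m → Fin (n + 1) => ∀ i j : Fin m, i < j → x i < x j) =
        univ.filter StrictMono :=
    filter_congr fun x _ => ⟨fun h _ _ => h _ _, fun h _ _ hij => h hij⟩
  have ht : (1 + lam) ^ (m * (m - 1) / 2) ≠ 0 := by positivity
  calc _ = (∏ i ∈ range m, ((n - i).factorial / i.factorial : ℝ)) /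
        ((n.factorial : ℝ) ^ m * lam ^ (m * (m - 1) / 2) * (1 + lam) ^ (m * (n + 1 - m))) *
          krawtchoukPartition n m lam := by
        rw [hfilter, krawtchoukPartition, mul_sum]
        refine sum_congr rfl fun x _ => ?_
        rw [prod_choose_mul_pow, det_vandermonde_eq_prod_prod_Iio]
        field_simp
    _ = 1 := by
        field_simp
        exact mul_right_cancel₀ ht (by linear_combination hprod)

/-- Normalization of the single-level (Krawtchouk-type) particle distribution: the sum over all
strictly increasing `m`-tuples `0 ≤ x_1 < ⋯ < x_m ≤ n` of
`λ^{∑ x_i - m(m-1)/2}/(1+λ)^{m(n+1-m)} · Δ(x)² / ∏ x_i!(n-x_i)! · ∏_{i=0}^{m-1} (n-i)!/i!`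
equals `1`. -/
theorem krawtchouk_normalization (n m : ℕ) (hm : 1 ≤ m) (hmn : m ≤ n)
    (lam : ℝ) (hlam : 0 < lam) :
    ∑ x ∈ Finset.univ.filter (fun x : Fin m → Fin (n + 1) =>
        ∀ i j : Fin m, i < j → x i < x j),
      (lam ^ (∑ i, (x i : ℕ)) / lam ^ (m * (m - 1) / 2)) / (1 + lam) ^ (m * (n + 1 - m)) *
        ((∏ j : Fin m, ∏ i ∈ Finset.Iio j, ((x j : ℕ) - (x i : ℕ) : ℝ)) ^ 2 /
          ∏ i : Fin m, ((Nat.factorial (x i) : ℝ) * (Nat.factorial (n - (x i : ℕ)) : ℝ))) *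
        ∏ i ∈ Finset.range m, ((Nat.factorial (n - i) : ℝ) / (Nat.factorial i : ℝ)) = 1 :=
  krawtchouk_normalization_general n m hmn lam hlam
end

section
/- Define a sequence (α_k) of rational functions in a parameter v by α_0 = v and α_k = sum over ℓ from 2 to k of (v * α_{ℓ-2} * α_{k-ℓ} - (2^ℓ * B_ℓ / ℓ!) * α_{k-ℓ}) for k ≥ 1 (so α_1 = 0). Then the formal power series f(z) = sum α_k z^k satisfies the quadratic equation v*z^2*f(z)^2 - z*coth(z)*f(z) + v = 0, where z*coth(z) is interpreted as the formal power series sum over even ℓ ≥ 0 of (2^ℓ B_ℓ/ℓ!) z^ℓ. -/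
/-!
Read coefficientwise, the recurrence says `f = v z² f² - (z coth z - 1) f + v`: the constant
term is `α₀ = v`, and `z coth z - 1 = ∑_{ℓ ≥ 2} (2^ℓ B_ℓ/ℓ!) z^ℓ` because the odd Bernoulli
numbers `B_ℓ` with `ℓ > 1` vanish. Rearranging gives the quadratic equation.
-/

open PowerSeries

theorem PowerSeries.coeff_X_pow_mul_mul {R : Type*} [CommSemiring R] (n k : ℕ) (p q : R⟦X⟧) :
    coeff k (X ^ n * p * q) = ∑ ℓ ∈ Finset.Icc n k, coeff (ℓ - n) p * coeff (k - ℓ) q := by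
  have hIcc : (Finset.range (k + 1)).filter (n ≤ ·) = Finset.Icc n k := by
    ext ℓ; simp only [Finset.mem_filter, Finset.mem_range, Finset.mem_Icc]; omega
  rw [coeff_mul,
    Finset.Nat.sum_antidiagonal_eq_sum_range_succ (fun i j => coeff i (X ^ n * p) * coeff j q),
    ← hIcc, Finset.sum_filter]
  simp only [coeff_X_pow_mul', ite_mul, zero_mul]

theorem mk_eq_of_quadratic_recurrence {R : Type*} [CommRing R] (v : R) (c α : ℕ → R)
    (h0 : α 0 = v)
    (hrec : ∀ k, 1 ≤ k → α k = ∑ ℓ ∈ Finset.Icc 2 k,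
      (v * α (ℓ - 2) * α (k - ℓ) - c ℓ * α (k - ℓ))) :
    mk α = C v * (X ^ 2 * mk α * mk α) - X ^ 2 * mk (fun i => c (i + 2)) * mk α + C v := by
  ext k
  simp only [map_add, map_sub, coeff_C_mul, coeff_X_pow_mul_mul, coeff_mk, coeff_C]
  rcases Nat.eq_zero_or_pos k with rfl | hk
  · simp [h0]
  · rw [hrec k hk, if_neg hk.ne', add_zero, Finset.sum_sub_distrib, Finset.mul_sum]
    congr 1
    · exact Finset.sum_congr rfl fun ℓ _ => by ring
    · exact Finset.sum_congr rfl fun ℓ hℓ => by rw [Nat.sub_add_cancel (Finset.mem_Icc.mp hℓ).1]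

theorem mk_even_bernoulli_eq_one_add_X_sq_mul :
    (mk fun ℓ => if Even ℓ then 2 ^ ℓ * bernoulli ℓ / (ℓ.factorial : ℚ) else 0) =
      1 + X ^ 2 * mk fun i => 2 ^ (i + 2) * bernoulli (i + 2) / ((i + 2).factorial : ℚ) := by
  ext (_ | _ | k)
  · simp
  · simp [coeff_X_pow_mul']
  · rw [map_add, coeff_one, if_neg (by omega), zero_add, show k + 1 + 1 = k + 2 from rfl,
      coeff_X_pow_mul, coeff_mk, coeff_mk]
    split_ifs with he
    · rfl
    · rw [bernoulli_eq_zero_of_odd (Nat.not_even_iff_odd.mp he) (by omega), mul_zero, zero_div]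

/-- The generating function `f(z) = ∑ α_k z^k` of the sequence defined by `α_0 = v` and
`α_k = ∑_{ℓ=2}^{k} (v α_{ℓ-2} α_{k-ℓ} - (2^ℓ B_ℓ/ℓ!) α_{k-ℓ})` satisfies the quadratic equation
`v z² f(z)² - z coth(z) f(z) + v = 0`, where `z coth(z) = ∑_{ℓ even} (2^ℓ B_ℓ/ℓ!) z^ℓ`
as a formal power series. -/
theorem alpha_generating_function_quadratic (v : ℚ) (α : ℕ → ℚ) (h0 : α 0 = v)
    (hrec : ∀ k, 1 ≤ k → α k = ∑ ℓ ∈ Finset.Icc 2 k,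
      (v * α (ℓ - 2) * α (k - ℓ) -
        2 ^ ℓ * bernoulli ℓ / (Nat.factorial ℓ : ℚ) * α (k - ℓ))) :
    PowerSeries.C v * PowerSeries.X ^ 2 * (PowerSeries.mk α) ^ 2
      - (PowerSeries.mk fun ℓ =>
          if Even ℓ then 2 ^ ℓ * bernoulli ℓ / (Nat.factorial ℓ : ℚ) else 0)
        * PowerSeries.mk α
      + PowerSeries.C v = 0 := by
  have hf := mk_eq_of_quadratic_recurrence v _ α h0 hrec
  rw [mk_even_bernoulli_eq_one_add_X_sq_mul]
  linear_combination -hf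
end

section
/- With L_{i,j}(v) defined by L_{0,j} = δ_{0,j} and L_{i+1,j}(v) = (L_{i,j}(v) + L_{i,j-1}(-v)) β_i(v), the row sums satisfy sum over k from 0 to n of L_{n,k}(v) = 2^n * prod over k from 1 to n of β_k(v) β_{k-1}(v), for every n ≥ 0. -/
/-- `β_i(v) = (1-2v)⁻¹` if `i ≡ 0 mod 4`, `(1+2v)⁻¹` if `i ≡ 2 mod 4`, and `1` if `i` is odd. -/
noncomputable def betaFn (i : ℕ) (v : ℝ) : ℝ :=
  if i % 4 = 0 then 1 / (1 - 2 * v) else if i % 4 = 2 then 1 / (1 + 2 * v) else 1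

/-- `L_{0,j} = δ_{0,j}` and `L_{i+1,j}(v) = (L_{i,j}(v) + L_{i,j-1}(-v)) β_i(v)`. -/
noncomputable def Lcoef : ℕ → ℤ → ℝ → ℝ
  | 0, j, _ => if j = 0 then 1 else 0
  | (i + 1), j, v => (Lcoef i j v + Lcoef i (j - 1) (-v)) * betaFn i v

/-!
Write `S_n(v)` for the row sum and `P_n(v)` (`betaProd`) for the product. Since row `n` is
supported on `0 ≤ k ≤ n`, the recursion gives `S_{n+1}(v) = (S_n(v) + S_n(-v)) β_n(v)`. On the other side,
`β_{k+2}(v) = β_k(-v)` makes `P_n(v) β_{n+1}(v)` an even function of `v`, and together with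
`β_k(v) + β_k(-v) = 2 β_k(v) β_k(-v)` this yields `P_n(v) + P_n(-v) = 2 β_{n+1}(v) P_n(v)`,
which is exactly what the induction `S_n = 2^n P_n` needs.
-/

open Finset

section betaFn

variable {v : ℝ}

lemma betaFn_add_two (k : ℕ) (v : ℝ) : betaFn (k + 2) v = betaFn k (-v) := by
  have hk : k % 4 = 0 ∨ k % 4 = 1 ∨ k % 4 = 2 ∨ k % 4 = 3 := by omega
  rcases hk with hk | hk | hk | hk <;>
    simp [betaFn, hk, Nat.add_mod k 2 4, sub_eq_add_neg]

lemma one_sub_two_mul_ne_zero (hv : |v| ≠ 1 / 2) : 1 - 2 * v ≠ 0 := by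
  intro h
  exact hv (by rw [show v = 1 / 2 by linarith]; norm_num)

lemma one_add_two_mul_ne_zero (hv : |v| ≠ 1 / 2) : 1 + 2 * v ≠ 0 := by
  intro h
  exact hv (by rw [show v = -(1 / 2) by linarith]; norm_num)

lemma betaFn_ne_zero (k : ℕ) (hv : |v| ≠ 1 / 2) : betaFn k v ≠ 0 := by
  unfold betaFn
  split_ifs
  · exact one_div_ne_zero (one_sub_two_mul_ne_zero hv)
  · exact one_div_ne_zero (one_add_two_mul_ne_zero hv)
  · exact one_ne_zero

lemma betaFn_add_betaFn_neg (k : ℕ) (hv : |v| ≠ 1 / 2) :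
    betaFn k v + betaFn k (-v) = 2 * betaFn k v * betaFn k (-v) := by
  have h₁ := one_sub_two_mul_ne_zero hv
  have h₂ := one_add_two_mul_ne_zero hv
  unfold betaFn
  split_ifs
  · rw [mul_neg, sub_neg_eq_add]
    field_simp
    ring
  · rw [mul_neg, ← sub_eq_add_neg]
    field_simp
    ring
  · ring

end betaFn

lemma Lcoef_eq_zero {i : ℕ} {j : ℤ} (hj : j < 0 ∨ (i : ℤ) < j) (v : ℝ) : Lcoef i j v = 0 := by
  induction i generalizing j v with
  | zero => simp [Lcoef, show j ≠ 0 by omega]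
  | succ i ih => simp [Lcoef, ih (j := j) (by omega), ih (j := j - 1) (by omega)]

lemma sum_range_Lcoef_succ (n : ℕ) (v : ℝ) :
    ∑ k ∈ range (n + 2), Lcoef (n + 1) k v =
      (∑ k ∈ range (n + 1), Lcoef n k v + ∑ k ∈ range (n + 1), Lcoef n k (-v)) * betaFn n v := by
  simp only [Lcoef, ← sum_mul, sum_add_distrib]
  rw [sum_range_succ, sum_range_succ' (fun k : ℕ => Lcoef n (k - 1) (-v)),
    Lcoef_eq_zero (by omega), Lcoef_eq_zero (by omega)]
  push_cast
  simp

noncomputable def betaProd (n : ℕ) (v : ℝ) : ℝ :=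
  ∏ k ∈ Icc 1 n, betaFn k v * betaFn (k - 1) v

lemma betaProd_succ (n : ℕ) (v : ℝ) :
    betaProd (n + 1) v = betaProd n v * (betaFn (n + 1) v * betaFn n v) := by
  rw [betaProd, prod_Icc_succ_top (by omega), Nat.add_sub_cancel, betaProd]

lemma betaProd_mul_betaFn_neg (n : ℕ) (v : ℝ) :
    betaProd n (-v) * betaFn (n + 1) (-v) = betaProd n v * betaFn (n + 1) v := by
  induction n with
  | zero => simp [betaProd, betaFn]
  | succ n ih =>
    rw [betaProd_succ, betaProd_succ, betaFn_add_two, betaFn_add_two, neg_neg]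
    linear_combination betaFn n v * betaFn n (-v) * ih

lemma betaProd_add_betaProd_neg (n : ℕ) {v : ℝ} (hv : |v| ≠ 1 / 2) :
    betaProd n v + betaProd n (-v) = 2 * betaFn (n + 1) v * betaProd n v := by
  apply mul_right_cancel₀ (betaFn_ne_zero (n + 1) (v := -v) (by rwa [abs_neg]))
  linear_combination betaProd_mul_betaFn_neg n v + betaProd n v * betaFn_add_betaFn_neg (n + 1) hv

/-- Row sums: `∑_{k=0}^{n} L_{n,k}(v) = 2^n ∏_{k=1}^{n} β_k(v) β_{k-1}(v)`. -/
theorem Lcoef_row_sum (v : ℝ) (hv : |v| < 1 / 2) (n : ℕ) :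
    ∑ k ∈ Finset.range (n + 1), Lcoef n k v =
      2 ^ n * ∏ k ∈ Finset.Icc 1 n, betaFn k v * betaFn (k - 1) v := by
  change _ = 2 ^ n * betaProd n v
  replace hv : |v| ≠ 1 / 2 := hv.ne
  induction n generalizing v with
  | zero => simp [Lcoef, betaProd]
  | succ n ih =>
    have hv' : |-v| ≠ 1 / 2 := by rwa [abs_neg]
    rw [sum_range_Lcoef_succ, ih v hv, ih (-v) hv', ← mul_add, betaProd_add_betaProd_neg n hv,
      betaProd_succ]
    ring
end

section
/- The diagonal entries of the L-array satisfy L_{k,k}(v) = (1-4v^2)^{-⌊k/4⌋} times: 1 if k ≡ 0 mod 4, (1-2v)^{-1} if k ≡ 1 mod 4, (1+2v)^{-1} if k ≡ 2 mod 4, and (1-4v^2)^{-1} if k ≡ 3 mod 4. -/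
lemma Lcoef_eq_zero_of_lt : ∀ {i : ℕ} {j : ℤ} (v : ℝ), (i : ℤ) < j → Lcoef i j v = 0
  | 0, _, _, h => if_neg (by omega)
  | _ + 1, _, v, h => by
    rw [Lcoef, Lcoef_eq_zero_of_lt v (by omega), Lcoef_eq_zero_of_lt (-v) (by omega),
      add_zero, zero_mul]

lemma Lcoef_succ_self (i : ℕ) (v : ℝ) :
    Lcoef (i + 1) (i + 1) v = Lcoef i i (-v) * betaFn i v := by
  rw [Lcoef, Lcoef_eq_zero_of_lt v (by omega), zero_add, add_sub_cancel_right]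

noncomputable def LcoefDiag (k : ℕ) (v : ℝ) : ℝ :=
  ((1 - 4 * v ^ 2)⁻¹) ^ (k / 4) *
    (if k % 4 = 0 then 1
     else if k % 4 = 1 then (1 - 2 * v)⁻¹
     else if k % 4 = 2 then (1 + 2 * v)⁻¹
     else (1 - 4 * v ^ 2)⁻¹)

lemma inv_one_sub_four_mul_sq {K : Type*} [Field K] (v : K) :
    (1 - 4 * v ^ 2)⁻¹ = (1 - 2 * v)⁻¹ * (1 + 2 * v)⁻¹ := by
  rw [← mul_inv]
  ring_nf

lemma LcoefDiag_succ (k : ℕ) (v : ℝ) :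
    LcoefDiag (k + 1) v = LcoefDiag k (-v) * betaFn k v := by
  obtain ⟨q, r, hr, rfl⟩ : ∃ q r, r < 4 ∧ k = 4 * q + r :=
    ⟨k / 4, k % 4, k.mod_lt four_pos, (k.div_add_mod 4).symm⟩
  simp only [LcoefDiag, betaFn, inv_one_sub_four_mul_sq, one_div, mul_neg, sub_neg_eq_add,
    ← sub_eq_add_neg, add_assoc, Nat.mul_add_div four_pos, Nat.mul_add_mod]
  interval_cases r <;>
    simp only [Nat.reduceAdd, Nat.reduceMod, Nat.reduceDiv, Nat.reduceEqDiff, ↓reduceIte,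
      add_zero, pow_succ] <;>
    ring

lemma Lcoef_self (k : ℕ) (v : ℝ) : Lcoef k k v = LcoefDiag k v := by
  induction k generalizing v with
  | zero => simp [Lcoef, LcoefDiag]
  | succ k ih => rw [Nat.cast_succ, Lcoef_succ_self, ih, LcoefDiag_succ]

theorem Lcoef_diagonal_general (v : ℝ) (k : ℕ) :
    Lcoef k k v = ((1 - 4 * v ^ 2)⁻¹) ^ (k / 4) *
      (if k % 4 = 0 then 1
       else if k % 4 = 1 then (1 - 2 * v)⁻¹
       else if k % 4 = 2 then (1 + 2 * v)⁻¹
       else (1 - 4 * v ^ 2)⁻¹) :=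
  Lcoef_self k v

/-- The diagonal entries:
`L_{k,k}(v) = (1-4v²)^{-⌊k/4⌋} · (1, (1-2v)⁻¹, (1+2v)⁻¹, (1-4v²)⁻¹)` according to
`k mod 4 = 0, 1, 2, 3`. -/
theorem Lcoef_diagonal (v : ℝ) (hv : |v| < 1 / 2) (k : ℕ) :
    Lcoef k k v = ((1 - 4 * v ^ 2)⁻¹) ^ (k / 4) *
      (if k % 4 = 0 then 1
       else if k % 4 = 1 then (1 - 2 * v)⁻¹
       else if k % 4 = 2 then (1 + 2 * v)⁻¹
       else (1 - 4 * v ^ 2)⁻¹) :=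
  Lcoef_diagonal_general v k
end
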